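/- Let p be a prime, r ≥ 1 and m ≥ 1 integers, and let h ∈ (Z_{p^r})[X] be a basic irreducible polynomial of degree m. Let R := (Z_{p^r})[X] / ⟨h⟩ be the corresponding Galois ring of characteristic p^r and cardinality p^{rm}. Then there exists an element β ∈ R such that the family (θ(β)), indexed by all ring automorphisms θ of R, is a basis of R as a module over Z_{p^r} (in particular, R has exactly m ring automorphisms). -/

import Mathlib

/-!
Reduction of coefficients `R = (ℤ/pʳ)[X]/(h) → K = 𝔽_p[X]/(h̄)` is surjective with
nilpotent kernel `pR`, and `h̄` is separable, so by Newton iteration every root of `h̄` in `K`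
lifts uniquely to a root of `h` in `R`. An endomorphism of `R` or `K` is determined by the image
of the root, so reduction identifies `Aut R` with `Gal(K/𝔽_p)`, a group of order `m = rank R`.
Lifting a normal basis element of `K/𝔽_p` to `β ∈ R`, the conjugates of `β` reduce to a basis
of `K`; by Nakayama they span `R`, and a spanning family of `rank R` elements of a free module
is a basis.
-/

open Polynomial

theorem RingHom.isUnit_of_isUnit_apply_of_ker_le_nilradical {S T : Type*} [CommRing S] [Ring T]
    {f : S →+* T} (hf : Function.Surjective f) (hker : RingHom.ker f ≤ nilradical S) {x : S}
    (hx : IsUnit (f x)) : IsUnit x := by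
  obtain ⟨y, hy⟩ := hf ↑hx.unit⁻¹
  have hnil : IsNilpotent (x * y - 1) :=
    hker (by rw [RingHom.mem_ker, map_sub, map_mul, hy, hx.mul_val_inv, map_one, sub_self])
  exact isUnit_of_mul_isUnit_left (x := x) (y := y) (by simpa using hnil.isUnit_add_one)

namespace AdjoinRoot

variable {A k : Type*} [CommRing A] [Field k] (φ : A →+* k) (h : A[X])

noncomputable abbrev reduction : AdjoinRoot h →+* AdjoinRoot (h.map φ) :=
  map φ h (h.map φ) dvd_rfl

variable {φ h}

theorem reduction_comp_algebraMap :
    (reduction φ h).comp (algebraMap A _) = (algebraMap k _).comp φ :=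
  RingHom.ext (map_of φ h _ dvd_rfl)

theorem reduction_smul (a : A) (x : AdjoinRoot h) :
    reduction φ h (a • x) = φ a • reduction φ h x := by
  rw [Algebra.smul_def, map_mul, ← RingHom.comp_apply, reduction_comp_algebraMap,
    RingHom.comp_apply, Algebra.smul_def]

theorem reduction_aeval (x : AdjoinRoot h) (f : A[X]) :
    reduction φ h (aeval x f) = aeval (reduction φ h x) (f.map φ) := by
  rw [aeval_def, hom_eval₂, reduction_comp_algebraMap, ← eval₂_map, ← aeval_def]

theorem reduction_comp_mk :
    (reduction φ h).comp (mk h) = (mk (h.map φ)).comp (mapRingHom φ) := by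
  ext <;> simp [reduction]

theorem reduction_surjective (hφ : Function.Surjective φ) :
    Function.Surjective (reduction φ h) := by
  rw [← (mk_surjective (g := h)).of_comp_iff, ← RingHom.coe_comp, reduction_comp_mk,
    RingHom.coe_comp]
  exact mk_surjective.comp (map_surjective φ hφ)

theorem ker_reduction_le (hφ : Function.Surjective φ) :
    RingHom.ker (reduction φ h) ≤ (RingHom.ker φ).map (algebraMap A (AdjoinRoot h)) := by
  intro x hx
  obtain ⟨f, rfl⟩ := mk_surjective x
  rw [RingHom.mem_ker, ← RingHom.comp_apply, reduction_comp_mk, RingHom.comp_apply,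
    mk_eq_zero] at hx
  obtain ⟨g, hg⟩ := hx
  obtain ⟨g, rfl⟩ := map_surjective φ hφ g
  have hfg : f - h * g ∈ (RingHom.ker φ).map C := by
    rw [← ker_mapRingHom, RingHom.mem_ker, map_sub, map_mul]
    simp only [coe_mapRingHom] at hg ⊢
    rw [hg, sub_self]
  have := Ideal.mem_map_of_mem (mk h) hfg
  rwa [Ideal.map_map, map_sub, map_mul, mk_self, zero_mul, sub_zero] at this

theorem isNilpotent_of_mem_ker_reduction (hφ : Function.Surjective φ)
    (hnil : RingHom.ker φ ≤ nilradical A) {x : AdjoinRoot h}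
    (hx : x ∈ RingHom.ker (reduction φ h)) : IsNilpotent x := by
  refine mem_nilradical.mp
    (Ideal.map_le_iff_le_comap.mpr (fun a ha => ?_) (ker_reduction_le hφ hx))
  exact mem_nilradical.mpr ((mem_nilradical.mp (hnil ha)).map (algebraMap A (AdjoinRoot h)))

theorem span_eq_top_of_span_reduction_eq_top (hφ : Function.Surjective φ)
    (hnil : RingHom.ker φ ≤ nilradical A) (hmonic : h.Monic) {ι : Type*} [Fintype ι]
    {b : ι → AdjoinRoot h} (hb : Submodule.span k (Set.range (reduction φ h ∘ b)) = ⊤) :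
    Submodule.span A (Set.range b) = ⊤ := by
  have : Module.Finite A (AdjoinRoot h) := hmonic.finite_adjoinRoot
  refine top_le_iff.mp (Submodule.le_of_le_smul_of_le_jacobson_bot Module.Finite.fg_top
    (hnil.trans Ideal.radical_le_jacobson) fun y _ => ?_)
  obtain ⟨c, hc⟩ := (Submodule.mem_span_range_iff_exists_fun k).mp
    (hb ▸ Submodule.mem_top : reduction φ h y ∈ _)
  choose a ha using fun i => hφ (c i)
  have hmem : ∑ i, a i • b i ∈ Submodule.span A (Set.range b) :=
    Submodule.sum_mem _ fun i _ => Submodule.smul_mem _ _ (Submodule.subset_span ⟨i, rfl⟩)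
  have hker : y - ∑ i, a i • b i ∈ RingHom.ker φ • (⊤ : Submodule A (AdjoinRoot h)) := by
    rw [Ideal.smul_top_eq_map, Submodule.restrictScalars_mem]
    refine ker_reduction_le hφ ?_
    rw [RingHom.mem_ker, map_sub, map_sum, ← hc]
    simp [reduction_smul, ha]
  simpa using Submodule.add_mem_sup hmem hker

theorem reduction_comp_eq_iff (θ : AdjoinRoot h →ₐ[A] AdjoinRoot h)
    (σ : AdjoinRoot (h.map φ) →ₐ[k] AdjoinRoot (h.map φ)) :
    (reduction φ h).comp θ = (σ : _ →+* _).comp (reduction φ h) ↔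
      reduction φ h (θ (root h)) = σ (root (h.map φ)) := by
  refine ⟨fun hθ => by simpa using RingHom.congr_fun hθ (root h), fun hroot => ?_⟩
  refine ringHom_ext (RingHom.ext fun a => ?_) (by simpa using hroot)
  have := RingHom.congr_fun (reduction_comp_algebraMap (φ := φ) (h := h)) a
  simp_all [← algebraMap_eq]

section IrreducibleReduction

variable [Fact (Irreducible (h.map φ))]

theorem reduction_eq_zero_iff_isNilpotent (hφ : Function.Surjective φ)
    (hnil : RingHom.ker φ ≤ nilradical A) {x : AdjoinRoot h} :
    reduction φ h x = 0 ↔ IsNilpotent x :=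
  ⟨isNilpotent_of_mem_ker_reduction hφ hnil, fun hx => (hx.map _).eq_zero⟩

theorem isUnit_of_reduction_ne_zero (hφ : Function.Surjective φ)
    (hnil : RingHom.ker φ ≤ nilradical A) {x : AdjoinRoot h} (hx : reduction φ h x ≠ 0) :
    IsUnit x :=
  RingHom.isUnit_of_isUnit_apply_of_ker_le_nilradical (reduction_surjective hφ)
    (fun _ => isNilpotent_of_mem_ker_reduction hφ hnil) (isUnit_iff_ne_zero.mpr hx)

section HenselLift

variable [PerfectField k]

theorem existsUnique_aeval_eq_zero_reduction_eq (hφ : Function.Surjective φ)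
    (hnil : RingHom.ker φ ≤ nilradical A) {α : AdjoinRoot (h.map φ)}
    (hα : aeval α (h.map φ) = 0) :
    ∃! x : AdjoinRoot h, aeval x h = 0 ∧ reduction φ h x = α := by
  obtain ⟨x₀, rfl⟩ := reduction_surjective hφ α
  have hsep : (h.map φ).Separable := PerfectField.separable_of_irreducible Fact.out
  have hroot : IsNilpotent (aeval x₀ h) := by
    rwa [← reduction_eq_zero_iff_isNilpotent hφ hnil, reduction_aeval]
  have hunit : IsUnit (aeval x₀ (derivative h)) := by
    refine isUnit_of_reduction_ne_zero hφ hnil ?_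
    rw [reduction_aeval, ← derivative_map]
    exact hsep.aeval_derivative_ne_zero hα
  refine (existsUnique_congr fun x => ?_).mp
    (existsUnique_nilpotent_sub_and_aeval_eq_zero hroot hunit)
  rw [← reduction_eq_zero_iff_isNilpotent hφ hnil, map_sub, sub_eq_zero, eq_comm, and_comm]

theorem existsUnique_algHom_reduction_comp_eq (hφ : Function.Surjective φ)
    (hnil : RingHom.ker φ ≤ nilradical A)
    (σ : AdjoinRoot (h.map φ) →ₐ[k] AdjoinRoot (h.map φ)) :
    ∃! θ : AdjoinRoot h →ₐ[A] AdjoinRoot h,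
      (reduction φ h).comp θ = (σ : _ →+* _).comp (reduction φ h) := by
  obtain ⟨x, ⟨hx, hxσ⟩, hx_unique⟩ :=
    existsUnique_aeval_eq_zero_reduction_eq hφ hnil (aeval_algHom_eq_zero _ σ)
  refine ⟨liftAlgHom h (Algebra.ofId A _) x (by simpa [aeval_def] using hx),
    (reduction_comp_eq_iff _ σ).mpr ?_, fun θ hθ => algHom_ext ?_⟩
  · rwa [liftAlgHom_root]
  · rw [liftAlgHom_root]
    exact hx_unique _ ⟨aeval_algHom_eq_zero _ θ, (reduction_comp_eq_iff θ σ).mp hθ⟩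

variable (h) in
noncomputable def henselLift (hφ : Function.Surjective φ)
    (hnil : RingHom.ker φ ≤ nilradical A)
    (σ : AdjoinRoot (h.map φ) →ₐ[k] AdjoinRoot (h.map φ)) :
    AdjoinRoot h →ₐ[A] AdjoinRoot h :=
  (existsUnique_algHom_reduction_comp_eq hφ hnil σ).exists.choose

theorem reduction_comp_henselLift (hφ : Function.Surjective φ)
    (hnil : RingHom.ker φ ≤ nilradical A)
    (σ : AdjoinRoot (h.map φ) →ₐ[k] AdjoinRoot (h.map φ)) :
    (reduction φ h).comp (henselLift h hφ hnil σ) = (σ : _ →+* _).comp (reduction φ h) :=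
  (existsUnique_algHom_reduction_comp_eq hφ hnil σ).exists.choose_spec

theorem eq_henselLift (hφ : Function.Surjective φ)
    (hnil : RingHom.ker φ ≤ nilradical A)
    {σ : AdjoinRoot (h.map φ) →ₐ[k] AdjoinRoot (h.map φ)}
    {θ : AdjoinRoot h →ₐ[A] AdjoinRoot h}
    (hθ : (reduction φ h).comp θ = (σ : _ →+* _).comp (reduction φ h)) :
    θ = henselLift h hφ hnil σ :=
  (existsUnique_algHom_reduction_comp_eq hφ hnil σ).unique hθ
    (reduction_comp_henselLift hφ hnil σ)

theorem henselLift_comp (hφ : Function.Surjective φ)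
    (hnil : RingHom.ker φ ≤ nilradical A)
    (σ τ : AdjoinRoot (h.map φ) →ₐ[k] AdjoinRoot (h.map φ)) :
    (henselLift h hφ hnil σ).comp (henselLift h hφ hnil τ) =
      henselLift h hφ hnil (σ.comp τ) := by
  refine eq_henselLift hφ hnil ?_
  rw [AlgHom.comp_toRingHom, ← RingHom.comp_assoc, reduction_comp_henselLift,
    RingHom.comp_assoc, reduction_comp_henselLift, ← RingHom.comp_assoc, AlgHom.comp_toRingHom]

theorem henselLift_id (hφ : Function.Surjective φ)
    (hnil : RingHom.ker φ ≤ nilradical A) :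
    henselLift h hφ hnil (AlgHom.id k _) = AlgHom.id A _ :=
  (eq_henselLift hφ hnil rfl).symm

noncomputable def henselLiftEquiv (hφ : Function.Surjective φ)
    (hnil : RingHom.ker φ ≤ nilradical A)
    (σ : AdjoinRoot (h.map φ) ≃ₐ[k] AdjoinRoot (h.map φ)) :
    AdjoinRoot h ≃ₐ[A] AdjoinRoot h :=
  AlgEquiv.ofAlgHom (henselLift h hφ hnil σ) (henselLift h hφ hnil σ.symm)
    (by rw [henselLift_comp, σ.comp_symm, henselLift_id])
    (by rw [henselLift_comp, σ.symm_comp, henselLift_id])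

theorem reduction_henselLiftEquiv_apply (hφ : Function.Surjective φ)
    (hnil : RingHom.ker φ ≤ nilradical A)
    (σ : AdjoinRoot (h.map φ) ≃ₐ[k] AdjoinRoot (h.map φ))
    (x : AdjoinRoot h) :
    reduction φ h (henselLiftEquiv hφ hnil σ x) = σ (reduction φ h x) :=
  RingHom.congr_fun (reduction_comp_henselLift hφ hnil σ.toAlgHom) x

theorem henselLiftEquiv_bijective (hφ : Function.Surjective φ)
    (hnil : RingHom.ker φ ≤ nilradical A) :
    Function.Bijective (henselLiftEquiv (h := h) hφ hnil) := by
  refine ⟨fun σ τ hστ => AlgEquiv.ext fun y => ?_, fun θ => ?_⟩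
  · obtain ⟨x, rfl⟩ := reduction_surjective hφ y
    rw [← reduction_henselLiftEquiv_apply hφ hnil, ← reduction_henselLiftEquiv_apply hφ hnil,
      hστ]
  have : FiniteDimensional k (AdjoinRoot (h.map φ)) :=
    (powerBasis (Fact.out : Irreducible (h.map φ)).ne_zero).finite
  have hθ : aeval (θ (root h)) h = 0 := by simpa using aeval_algHom_eq_zero _ θ.toAlgHom
  have hσ : aeval (reduction φ h (θ (root h))) (h.map φ) = 0 := by
    rw [← reduction_aeval, hθ, map_zero]
  let σ := liftAlgHom (h.map φ) (Algebra.ofId k _) (reduction φ h (θ (root h)))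
    (by simpa [aeval_def] using hσ)
  refine ⟨AlgEquiv.ofBijective σ σ.bijective, AlgEquiv.coe_toAlgHom_injective ?_⟩
  refine (eq_henselLift hφ hnil ((reduction_comp_eq_iff θ.toAlgHom _).mpr ?_)).symm
  simp [σ]

end HenselLift

theorem exists_basis_algEquiv_apply [Finite k] (hφ : Function.Surjective φ)
    (hnil : RingHom.ker φ ≤ nilradical A) (hmonic : h.Monic) :
    ∃ β : AdjoinRoot h,
      ∃ b : Module.Basis (AdjoinRoot h ≃ₐ[A] AdjoinRoot h) A (AdjoinRoot h),
        ∀ θ, b θ = θ β := by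
  have : Module.Finite k (AdjoinRoot (h.map φ)) := (hmonic.map φ).finite_adjoinRoot
  have : Finite (AdjoinRoot (h.map φ)) := Module.finite_of_finite k
  have : Nontrivial A := hφ.nontrivial
  obtain ⟨β, hβ⟩ :=
    reduction_surjective hφ (IsGalois.normalBasis k (AdjoinRoot (h.map φ)) 1)
  have hspan : Submodule.span A (Set.range fun σ => henselLiftEquiv hφ hnil σ β) = ⊤ := by
    refine span_eq_top_of_span_reduction_eq_top hφ hnil hmonic ?_
    convert (IsGalois.normalBasis k (AdjoinRoot (h.map φ))).span_eq
    ext σ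
    rw [Function.comp_apply, reduction_henselLiftEquiv_apply, hβ]
    exact (IsGalois.normalBasis_apply σ).symm
  have hcard : Fintype.card (AdjoinRoot (h.map φ) ≃ₐ[k] AdjoinRoot (h.map φ)) =
      Module.finrank A (AdjoinRoot h) := by
    rw [Fintype.card_eq_nat_card, IsGalois.card_aut_eq_finrank,
      (powerBasis' (hmonic.map φ)).finrank, (powerBasis' hmonic).finrank, powerBasis'_dim,
      powerBasis'_dim, hmonic.natDegree_map]
  let e := Equiv.ofBijective _ (henselLiftEquiv_bijective (h := h) hφ hnil)
  refine ⟨β, (basisOfTopLeSpanOfCardEqFinrank _ hspan.ge hcard).reindex e, fun θ => ?_⟩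
  rw [Module.Basis.reindex_apply, coe_basisOfTopLeSpanOfCardEqFinrank]
  exact congr($(e.apply_symm_apply θ) β)

end IrreducibleReduction

end AdjoinRoot

theorem ZMod.ker_castHom_pow_le_nilradical (p : ℕ) [NeZero p] {r : ℕ} (hr : r ≠ 0) :
    RingHom.ker (ZMod.castHom (dvd_pow_self p hr) (ZMod p)) ≤ nilradical (ZMod (p ^ r)) := by
  intro x hx
  rw [← ZMod.natCast_zmod_val x, RingHom.mem_ker, map_natCast, ZMod.natCast_eq_zero_iff] at hx
  refine mem_nilradical.mpr ⟨r, ?_⟩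
  rw [← ZMod.natCast_zmod_val x, ← Nat.cast_pow, ZMod.natCast_eq_zero_iff]
  exact pow_dvd_pow_of_dvd hx r

def ZMod.algEquivEquivRingEquiv {n : ℕ} {S T : Type*} [Ring S] [Ring T] [Algebra (ZMod n) S]
    [Algebra (ZMod n) T] : (S ≃ₐ[ZMod n] T) ≃ (S ≃+* T) where
  toFun := AlgEquiv.toRingEquiv
  invFun θ := AlgEquiv.ofRingEquiv (f := θ) fun a =>
    RingHom.congr_fun (RingHom.ext_zmod ((θ : S →+* T).comp (algebraMap _ _)) (algebraMap _ _)) a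

theorem galoisRing_normal_basis_general (p r : ℕ) [Fact p.Prime] (hr : 1 ≤ r)
    (h : Polynomial (ZMod (p ^ r))) (hmonic : h.Monic)
    (hirr : Irreducible (h.map
      (ZMod.castHom (dvd_pow_self p (Nat.one_le_iff_ne_zero.mp hr)) (ZMod p)))) :
    ∃ β : Polynomial (ZMod (p ^ r)) ⧸ Ideal.span {h},
      ∃ b : Module.Basis ((Polynomial (ZMod (p ^ r)) ⧸ Ideal.span {h}) ≃+*
              (Polynomial (ZMod (p ^ r)) ⧸ Ideal.span {h}))
            (ZMod (p ^ r)) (Polynomial (ZMod (p ^ r)) ⧸ Ideal.span {h}),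
        ∀ θ : (Polynomial (ZMod (p ^ r)) ⧸ Ideal.span {h}) ≃+*
              (Polynomial (ZMod (p ^ r)) ⧸ Ideal.span {h}),
          b θ = θ β := by
  have : Fact (Irreducible _) := ⟨hirr⟩
  obtain ⟨β, b, hb⟩ := AdjoinRoot.exists_basis_algEquiv_apply (ZMod.ringHom_surjective _)
    (ZMod.ker_castHom_pow_le_nilradical p (Nat.one_le_iff_ne_zero.mp hr)) hmonic
  exact ⟨β, b.reindex ZMod.algEquivEquivRingEquiv,
    fun θ => (b.reindex_apply _ θ).trans (hb _)⟩

/-- the Galois ring `R = (Z_{p^r})[X]/⟨h⟩`, for `h` basic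
irreducible of degree `m`, has a normal basis over `Z_{p^r}`: there is
`β ∈ R` such that the family `(θ β)`, indexed by the ring automorphisms `θ`
of `R`, is a `Z_{p^r}`-basis of `R`. -/
theorem galoisRing_normal_basis (p r m : ℕ) [Fact p.Prime] (hr : 1 ≤ r) (hm : 1 ≤ m)
    (h : Polynomial (ZMod (p ^ r))) (hmonic : h.Monic) (hdeg : h.natDegree = m)
    (hirr : Irreducible (h.map
      (ZMod.castHom (dvd_pow_self p (Nat.one_le_iff_ne_zero.mp hr)) (ZMod p)))) :
    ∃ β : Polynomial (ZMod (p ^ r)) ⧸ Ideal.span {h},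
      ∃ b : Module.Basis ((Polynomial (ZMod (p ^ r)) ⧸ Ideal.span {h}) ≃+*
              (Polynomial (ZMod (p ^ r)) ⧸ Ideal.span {h}))
            (ZMod (p ^ r)) (Polynomial (ZMod (p ^ r)) ⧸ Ideal.span {h}),
        ∀ θ : (Polynomial (ZMod (p ^ r)) ⧸ Ideal.span {h}) ≃+*
              (Polynomial (ZMod (p ^ r)) ⧸ Ideal.span {h}),
          b θ = θ β :=
  galoisRing_normal_basis_general p r hr h hmonic hirr
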